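/- arXiv:2510.04123 — 7 statements merged into one kernel-verified Lean document; each statement's English description precedes it below -/
import Mathlib

section
/- Let η : ℝ → ℝ be strictly convex on the closed interval [φ_m, φ_M], where φ_m < φ_M are real numbers, and let λ be a real number with 1/2 < λ < 1. Then there do not exist φ₁, φ₂ ∈ [φ_m, φ_M] such that φ₁ + φ₂ = 2(λ·φ_m + (1−λ)·φ_M) and η(φ₁) + η(φ₂) = 2(λ·η(φ_m) + (1−λ)·η(φ_M)). -/
/-!
Write `a = φm`, `b = φM`. Strict convexity puts the graph of `η` over `[a, b]` below its chord,
strictly so at interior points. The chord is affine, so its values at `φ₁, φ₂` add up to the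
prescribed `η`-sum as soon as `φ₁ + φ₂` has the prescribed value. Hence both points lie on the
chord, i.e. are endpoints; but then `φ₁ + φ₂ ∈ {2a, a + b, 2b}`, whereas `λ ∈ (1/2, 1)` puts
the prescribed sum strictly between `2a` and `a + b`.
-/

open Set

variable {f : ℝ → ℝ} {a b x : ℝ}

theorem ConvexOn.mul_le_chord (hf : ConvexOn ℝ (Icc a b) f) (hx : x ∈ Icc a b) :
    (b - a) * f x ≤ (b - x) * f a + (x - a) * f b := by
  rcases hx.1.eq_or_lt with rfl | hax
  · linarith
  rcases hx.2.eq_or_lt with rfl | hxb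
  · linarith
  exact hf.secant_mono_aux1 (left_mem_Icc.2 (hax.trans hxb).le)
    (right_mem_Icc.2 (hax.trans hxb).le) hax hxb

theorem StrictConvexOn.eq_left_or_eq_right_of_chord_le (hf : StrictConvexOn ℝ (Icc a b) f)
    (hx : x ∈ Icc a b) (h : (b - x) * f a + (x - a) * f b ≤ (b - a) * f x) :
    x = a ∨ x = b := by
  by_contra! hne
  have hax : a < x := hx.1.lt_of_ne hne.1.symm
  have hxb : x < b := hx.2.lt_of_ne hne.2
  have hlt := hf.secant_strict_mono_aux1 (left_mem_Icc.2 (hax.trans hxb).le)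
    (right_mem_Icc.2 (hax.trans hxb).le) hax hxb
  linarith

/-- Core of Theorem 2.1: no two points of the strictly convex curve section
`{(φ, η φ) : φ ∈ [φ_m, φ_M]}` can have the prescribed average
`λ·(φ_m, η φ_m) + (1−λ)·(φ_M, η φ_M)` with `λ ∈ (1/2, 1)`. -/
theorem stmt_0 (η : ℝ → ℝ) (φm φM : ℝ) (hlt : φm < φM)
    (hconv : StrictConvexOn ℝ (Set.Icc φm φM) η)
    (lam : ℝ) (hlam1 : 1 / 2 < lam) (hlam2 : lam < 1) :
    ¬ ∃ φ₁ φ₂ : ℝ, φ₁ ∈ Set.Icc φm φM ∧ φ₂ ∈ Set.Icc φm φM ∧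
      φ₁ + φ₂ = 2 * (lam * φm + (1 - lam) * φM) ∧
      η φ₁ + η φ₂ = 2 * (lam * η φm + (1 - lam) * η φM) := by
  rintro ⟨φ₁, φ₂, h₁, h₂, hsum, hηsum⟩
  have hchord_sum : (φM - φ₁) * η φm + (φ₁ - φm) * η φM + ((φM - φ₂) * η φm + (φ₂ - φm) * η φM)
      = (φM - φm) * η φ₁ + (φM - φm) * η φ₂ := by
    linear_combination (η φM - η φm) * hsum - (φM - φm) * hηsum
  have hle₁ := hconv.convexOn.mul_le_chord h₁
  have hle₂ := hconv.convexOn.mul_le_chord h₂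
  have hend₁ := hconv.eq_left_or_eq_right_of_chord_le h₁ (by linarith)
  have hend₂ := hconv.eq_left_or_eq_right_of_chord_le h₂ (by linarith)
  have hlow : 2 * φm < 2 * (lam * φm + (1 - lam) * φM) := by nlinarith
  have hhigh : 2 * (lam * φm + (1 - lam) * φM) < φm + φM := by nlinarith
  rcases hend₁ with rfl | rfl <;> rcases hend₂ with rfl | rfl <;> linarith
end

section
/- Let η : ℝ → ℝ be strictly convex on [0, ∞) with η(0) ≤ 0, let 0 < φ_m < φ_M, set k_min := η(φ_m)/φ_m and k_max := η(φ_M)/φ_M, and let λ be a real number with 1/2 < λ < 1. Then there do not exist pairs (φ₁, y₁) and (φ₂, y₂) of real numbers with φ_i > 0, k_min·φ_i ≤ y_i ≤ k_max·φ_i, and y_i ≤ η(φ_i) for i = 1, 2, such that φ₁ + φ₂ = 2(λ·φ_m + (1−λ)·φ_M) and y₁ + y₂ = 2(λ·η(φ_m) + (1−λ)·η(φ_M)). -/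
/-- Second part of Theorem 2.1: no two states in the region `Λ` (bounded by the
lines `y = k_min·φ`, `y = k_max·φ` and the strictly convex curve `y = η(φ)`)
can have the prescribed average `λ·(φ_m, η φ_m) + (1−λ)·(φ_M, η φ_M)`. -/
theorem stmt_1 (η : ℝ → ℝ) (hconv : StrictConvexOn ℝ (Set.Ici (0 : ℝ)) η)
    (hη0 : η 0 ≤ 0) (φm φM : ℝ) (hφm : 0 < φm) (hlt : φm < φM)
    (lam : ℝ) (hlam1 : 1 / 2 < lam) (hlam2 : lam < 1) :
    ¬ ∃ φ₁ y₁ φ₂ y₂ : ℝ,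
      (0 < φ₁ ∧ (η φm / φm) * φ₁ ≤ y₁ ∧ y₁ ≤ (η φM / φM) * φ₁ ∧ y₁ ≤ η φ₁) ∧
      (0 < φ₂ ∧ (η φm / φm) * φ₂ ≤ y₂ ∧ y₂ ≤ (η φM / φM) * φ₂ ∧ y₂ ≤ η φ₂) ∧
      φ₁ + φ₂ = 2 * (lam * φm + (1 - lam) * φM) ∧
      y₁ + y₂ = 2 * (lam * η φm + (1 - lam) * η φM) := by
  rintro ⟨φ₁, y₁, φ₂, y₂, ⟨h1pos, h1min, -, h1η⟩, ⟨h2pos, h2min, -, h2η⟩, hsum, hysum⟩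
  have hMm : 0 < φM - φm := by linarith
  -- slope monotonicity: for 0 < a < b, η a * b < η b * a (i.e. η a / a < η b / b)
  have slope : ∀ a b : ℝ, 0 < a → a < b → η a * b < η b * a := by
    intro a b ha hab
    have hb : 0 < b := ha.trans hab
    have ht0 : 0 < a / b := by positivity
    have ht1 : a / b < 1 := (div_lt_one hb).2 hab
    have h := hconv.2 (Set.mem_Ici.2 le_rfl) (Set.mem_Ici.2 hb.le)
      hb.ne (by linarith : (0:ℝ) < 1 - a / b) ht0
      (by ring)
    simp only [smul_eq_mul, mul_zero, zero_add] at h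
    have hab' : a / b * b = a := div_mul_cancel₀ a hb.ne'
    rw [hab'] at h
    have h2 : (1 - a / b) * η 0 ≤ 0 := by nlinarith
    have h3 : η a < a / b * η b := by linarith
    have h4 := mul_lt_mul_of_pos_right h3 hb
    have h5 : a / b * η b * b = η b * a := by field_simp
    linarith [h4, h5.le, h5.ge]
  -- feasibility forces φᵢ ≥ φm
  have hge : ∀ φ y : ℝ, 0 < φ → (η φm / φm) * φ ≤ y → y ≤ η φ → φm ≤ φ := by
    intro φ y hφ hmin hη
    by_contra hcon
    push_neg at hcon
    have hs := slope φ φm hφ hcon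
    have h6 : η φm / φm * φ * φm = η φm * φ := by field_simp
    have h7 := mul_le_mul_of_nonneg_right (hmin.trans hη) hφm.le
    rw [h6] at h7
    linarith
  have h1ge : φm ≤ φ₁ := hge φ₁ y₁ h1pos h1min h1η
  have h2ge : φm ≤ φ₂ := hge φ₂ y₂ h2pos h2min h2η
  -- each φᵢ < φM
  have hkey : (0:ℝ) < (2 * lam - 1) * (φM - φm) :=
    mul_pos (by linarith) hMm
  have h1lt : φ₁ < φM := by nlinarith [hkey]
  have h2lt : φ₂ < φM := by nlinarith [hkey]
  -- chord inequality: for φm ≤ φ < φM,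
  -- (φM - φm) * η φ ≤ (φM - φ) * η φm + (φ - φm) * η φM, strict if φm < φ
  have chord : ∀ φ : ℝ, φm < φ → φ < φM →
      (φM - φm) * η φ < (φM - φ) * η φm + (φ - φm) * η φM := by
    intro φ hl hr
    set t : ℝ := (φM - φ) / (φM - φm) with ht
    have e1 : t * (φM - φm) = φM - φ := div_mul_cancel₀ _ hMm.ne'
    have ht0 : 0 < t := div_pos (by linarith) hMm
    have ht1 : 0 < 1 - t := by
      have : t < 1 := (div_lt_one hMm).2 (by linarith)
      linarith
    have h := hconv.2 (Set.mem_Ici.2 (by linarith : (0:ℝ) ≤ φm))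
      (Set.mem_Ici.2 (by linarith : (0:ℝ) ≤ φM)) (by intro h; linarith)
      ht0 ht1 (by ring)
    simp only [smul_eq_mul] at h
    have hx : t * φm + (1 - t) * φM = φ := by nlinarith [e1]
    rw [hx] at h
    have h2 := mul_lt_mul_of_pos_left h hMm
    have e2 : (φM - φm) * (t * η φm + (1 - t) * η φM)
        = (φM - φ) * η φm + (φ - φm) * η φM := by
      linear_combination (η φm - η φM) * e1
    rw [e2] at h2
    exact h2
  have chord' : ∀ φ : ℝ, φm ≤ φ → φ < φM →
      (φM - φm) * η φ ≤ (φM - φ) * η φm + (φ - φm) * η φM := by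
    intro φ hl hr
    rcases eq_or_lt_of_le hl with h | h
    · rw [← h]; nlinarith
    · exact (chord φ h hr).le
  -- not both can equal φm
  have hnb : φm < φ₁ ∨ φm < φ₂ := by
    by_contra hcon
    push_neg at hcon
    have e1 : φ₁ = φm := le_antisymm hcon.1 h1ge
    have e2 : φ₂ = φm := le_antisymm hcon.2 h2ge
    rw [e1, e2] at hsum
    nlinarith [mul_pos (by linarith : (0:ℝ) < 1 - lam) hMm]
  -- derive the contradiction
  have key : (φM - φm) * (η φ₁ + η φ₂) <
      (2 * φM - (φ₁ + φ₂)) * η φm + ((φ₁ + φ₂) - 2 * φm) * η φM := by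
    rcases hnb with h | h
    · have c1 := chord φ₁ h h1lt
      have c2 := chord' φ₂ h2ge h2lt
      linarith
    · have c1 := chord' φ₁ h1ge h1lt
      have c2 := chord φ₂ h h2lt
      linarith
  rw [hsum] at key
  have e3 : (2 * φM - 2 * (lam * φm + (1 - lam) * φM)) * η φm
      + (2 * (lam * φm + (1 - lam) * φM) - 2 * φm) * η φM
      = (φM - φm) * (y₁ + y₂) := by rw [hysum]; ring
  rw [e3] at key
  have e4 : (φM - φm) * (y₁ + y₂) ≤ (φM - φm) * (η φ₁ + η φ₂) :=
    mul_le_mul_of_nonneg_left (add_le_add h1η h2η) hMm.le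
  linarith
end

section
/- Let ε > 0, Δξ > 0, and k_min ≤ k_max be real numbers. Suppose the cell values satisfy J > ε, φ ∈ (0, 1), and k ∈ [k_min, k_max], and let v, w ∈ ℝ (the velocities v_j^n at the cell and v_{j+1}^n at the right neighbor). Define the first-order moving-mesh update by J' := J + (Δτ/Δξ)·(w − v), (Jφ)' := J·φ, (Jy)' := J·φ·k (i.e., Jφ and Jy are unchanged), φ' := J·φ / J', and k' := k. Let Δτ* := Δξ·min{J − ε, J·(1−φ)}/(v − w) if v > w, and Δτ* := +∞ otherwise. Then for every Δτ with 0 < Δτ < Δτ*, the updated values satisfy J' > ε, φ' ∈ (0, 1), and k' ∈ [k_min, k_max]. -/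
/-- Theorem 3.1: the first-order moving-mesh scheme (grid velocity `c ≡ v`)
preserves the invariant domain `Ω₁ = {J > ε, φ ∈ (0,1), k ∈ [k_min, k_max]}`
under the time-step restriction `0 < Δτ < Δτ*`, where
`Δτ* = Δξ·min{J−ε, J·(1−φ)}/(v−w)` if `v > w` and `Δτ* = +∞` otherwise. -/
theorem stmt_5 (ε Δξ kmin kmax J φ k v w Δτ : ℝ)
    (hε : 0 < ε) (hΔξ : 0 < Δξ) (hkle : kmin ≤ kmax)
    (hJ : ε < J) (hφ0 : 0 < φ) (hφ1 : φ < 1)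
    (hk1 : kmin ≤ k) (hk2 : k ≤ kmax)
    (hΔτ : 0 < Δτ)
    (hΔτstar : v > w → Δτ < Δξ * min (J - ε) (J * (1 - φ)) / (v - w)) :
    ε < J + Δτ / Δξ * (w - v) ∧
    0 < J * φ / (J + Δτ / Δξ * (w - v)) ∧
    J * φ / (J + Δτ / Δξ * (w - v)) < 1 ∧
    kmin ≤ k ∧ k ≤ kmax := by
  set J' := J + Δτ / Δξ * (w - v) with hJ'
  have key : ε < J' ∧ J * φ < J' := by
    rcases le_or_gt v w with h | h
    · have hd : 0 ≤ Δτ / Δξ * (w - v) :=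
        mul_nonneg (div_nonneg hΔτ.le hΔξ.le) (by linarith)
      rw [hJ']
      exact ⟨by linarith, by nlinarith⟩
    · have hb := hΔτstar h
      have hvw : 0 < v - w := by linarith
      have hb' : Δτ * (v - w) < Δξ * min (J - ε) (J * (1 - φ)) := by
        rw [lt_div_iff₀ hvw] at hb; linarith
      have h1 : min (J - ε) (J * (1 - φ)) ≤ J - ε := min_le_left _ _
      have h2 : min (J - ε) (J * (1 - φ)) ≤ J * (1 - φ) := min_le_right _ _
      have hd : Δτ / Δξ * (w - v) = -(Δτ * (v - w)) / Δξ := by ring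
      have hA : Δτ * (v - w) / Δξ < J - ε := by
        rw [div_lt_iff₀ hΔξ]; nlinarith
      have hB : Δτ * (v - w) / Δξ < J * (1 - φ) := by
        rw [div_lt_iff₀ hΔξ]; nlinarith
      rw [hJ', hd, neg_div]
      exact ⟨by linarith, by nlinarith⟩
  obtain ⟨h1, h2⟩ := key
  have hJ'pos : 0 < J' := lt_trans hε h1
  refine ⟨h1, ?_, ?_, hk1, hk2⟩
  · exact div_pos (mul_pos (hε.trans hJ) hφ0) hJ'pos
  · rw [div_lt_one hJ'pos]; exact h2
end

section
/- Let ε > 0, Δξ > 0, v_ref > 0, γ > 0, k_min ≤ k_max, and 0 ≤ v_min ≤ v_max be real numbers. Suppose the cell values satisfy J > ε, φ ∈ (0, 1), k ∈ [k_min, k_max], and v := k − (v_ref/γ)·φ^γ ∈ [v_min, v_max]; let w ∈ ℝ be the right-neighbor velocity v_{j+1}^n. Define the first-order moving-mesh update J' := J + (Δτ/Δξ)·(w − v), φ' := J·φ / J', k' := k, and v' := k − (v_ref/γ)·(φ')^γ. Define Δτ* := Δξ·min{J − ε, J·(1−φ)}/(v − w) if v > w, and Δτ* := +∞ otherwise.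 Define φ̌ := ((γ/v_ref)·(k − v_max))^{1/γ} and φ̂ := ((γ/v_ref)·(k − v_min))^{1/γ}, and set Δτ** := Δξ·J·(φ − φ̌)/(φ̌·(w − v)) if v < w and k > v_max; Δτ** := Δξ·J·(φ̂ − φ)/(φ̂·(v − w)) if v > w; and Δτ** := +∞ otherwise. Then for every Δτ with 0 < Δτ < min{Δτ*, Δτ**}, the updated values satisfy J' > ε, φ' ∈ (0, 1), k' ∈ [k_min, k_max], and v' ∈ [v_min, v_max]. -/
/-- Theorem 3.2: first-order bound preservation for the ARZ model with `γ > 0`,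
pressure `p(φ) = (v_ref/γ)·φ^γ`.  The moving-mesh update (grid velocity `c ≡ v`)
preserves `Ω = {J > ε, φ ∈ (0,1), k ∈ [k_min,k_max], v ∈ [v_min,v_max]}` under
`0 < Δτ < min{Δτ*, Δτ**}` (with the convention that absent cases give `+∞`). -/
theorem stmt_6 (ε Δξ vref γ kmin kmax vmin vmax J φ k v w Δτ : ℝ)
    (hε : 0 < ε) (hΔξ : 0 < Δξ) (hvref : 0 < vref) (hγ : 0 < γ)
    (hkle : kmin ≤ kmax) (hv0 : 0 ≤ vmin) (hvle : vmin ≤ vmax)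
    (hJ : ε < J) (hφ0 : 0 < φ) (hφ1 : φ < 1)
    (hk1 : kmin ≤ k) (hk2 : k ≤ kmax)
    (hvdef : v = k - vref / γ * φ ^ γ)
    (hv1 : vmin ≤ v) (hv2 : v ≤ vmax)
    (hΔτ : 0 < Δτ)
    (hstar : v > w → Δτ < Δξ * min (J - ε) (J * (1 - φ)) / (v - w))
    (hstar1 : v < w ∧ k > vmax →
      Δτ < Δξ * J * (φ - (γ / vref * (k - vmax)) ^ (1 / γ)) /
        ((γ / vref * (k - vmax)) ^ (1 / γ) * (w - v)))
    (hstar2 : v > w →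
      Δτ < Δξ * J * ((γ / vref * (k - vmin)) ^ (1 / γ) - φ) /
        ((γ / vref * (k - vmin)) ^ (1 / γ) * (v - w))) :
    ε < J + Δτ / Δξ * (w - v) ∧
    0 < J * φ / (J + Δτ / Δξ * (w - v)) ∧
    J * φ / (J + Δτ / Δξ * (w - v)) < 1 ∧
    kmin ≤ k ∧ k ≤ kmax ∧
    vmin ≤ k - vref / γ * (J * φ / (J + Δτ / Δξ * (w - v))) ^ γ ∧
    k - vref / γ * (J * φ / (J + Δτ / Δξ * (w - v))) ^ γ ≤ vmax := by
  have hcγ : 0 < vref / γ := div_pos hvref hγ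
  have hφγ : 0 < φ ^ γ := Real.rpow_pos_of_pos hφ0 γ
  have hkv : k - v = vref / γ * φ ^ γ := by rw [hvdef]; ring
  have hΔ : 0 < Δτ / Δξ := div_pos hΔτ hΔξ
  have key : ∀ c : ℝ, 0 < c → (c ^ (1/γ)) ^ γ = c := by
    intro c hc
    rw [← Real.rpow_mul hc.le, one_div_mul_cancel hγ.ne', Real.rpow_one]
  rcases lt_trichotomy v w with hlt | heq | hgt
  · -- v < w
    have hApos : 0 < Δτ / Δξ * (w - v) := mul_pos hΔ (by linarith)
    have hDJ : J < J + Δτ / Δξ * (w - v) := by linarith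
    have hDpos : 0 < J + Δτ / Δξ * (w - v) := by linarith
    have hεD : ε < J + Δτ / Δξ * (w - v) := by linarith
    have hφ'pos : 0 < J * φ / (J + Δτ / Δξ * (w - v)) :=
      div_pos (mul_pos (by linarith) hφ0) hDpos
    have hφ'ltφ : J * φ / (J + Δτ / Δξ * (w - v)) < φ := by
      rw [div_lt_iff₀ hDpos]
      linarith [mul_pos hφ0 hApos]
    have hφ'γ : (J * φ / (J + Δτ / Δξ * (w - v))) ^ γ < φ ^ γ :=
      Real.rpow_lt_rpow (le_of_lt hφ'pos) hφ'ltφ hγ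
    have hφ'γpos : 0 < (J * φ / (J + Δτ / Δξ * (w - v))) ^ γ :=
      Real.rpow_pos_of_pos hφ'pos γ
    refine ⟨hεD, hφ'pos, by linarith, hk1, hk2, ?_, ?_⟩
    · linarith [mul_lt_mul_of_pos_left hφ'γ hcγ]
    · by_cases hkmax : k > vmax
      · have hP : 0 < γ / vref * (k - vmax) :=
          mul_pos (div_pos hγ hvref) (by linarith)
        set P := (γ / vref * (k - vmax)) ^ (1/γ) with hPdef
        have hPpos : 0 < P := Real.rpow_pos_of_pos hP (1/γ)
        have hPγ : P ^ γ = γ / vref * (k - vmax) := key _ hP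
        have h1 := hstar1 ⟨hlt, hkmax⟩
        have hden : 0 < P * (w - v) := mul_pos hPpos (by linarith)
        rw [lt_div_iff₀ hden] at h1
        have hPltφ' : P < J * φ / (J + Δτ / Δξ * (w - v)) := by
          rw [lt_div_iff₀ hDpos]
          have h2 : Δτ / Δξ * (P * (w - v)) < J * (φ - P) := by
            rw [div_mul_eq_mul_div, div_lt_iff₀ hΔξ]
            linarith
          linarith [h2]
        have h3 := Real.rpow_lt_rpow (le_of_lt hPpos) hPltφ' hγ
        rw [hPγ] at h3
        have h4 : vref / γ * (γ / vref * (k - vmax)) <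
            vref / γ * (J * φ / (J + Δτ / Δξ * (w - v))) ^ γ :=
          mul_lt_mul_of_pos_left h3 hcγ
        have h5 : vref / γ * (γ / vref * (k - vmax)) = k - vmax := by
          field_simp
        linarith
      · linarith [mul_pos hcγ hφ'γpos]
  · -- v = w
    have h0 : Δτ / Δξ * (w - v) = 0 := by rw [heq]; ring
    have hJ0 : (0:ℝ) < J := by linarith
    have hφ' : J * φ / (J + Δτ / Δξ * (w - v)) = φ := by
      rw [h0, add_zero]; field_simp
    rw [hφ', h0, add_zero]
    exact ⟨by linarith, hφ0, hφ1, hk1, hk2, by rw [← hvdef]; exact hv1,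
      by rw [← hvdef]; exact hv2⟩
  · -- v > w
    have hs := hstar hgt
    rw [lt_div_iff₀ (by linarith : (0:ℝ) < v - w)] at hs
    have hm1 : min (J - ε) (J * (1 - φ)) ≤ J - ε := min_le_left _ _
    have hm2 : min (J - ε) (J * (1 - φ)) ≤ J * (1 - φ) := min_le_right _ _
    have hAb1 : Δτ / Δξ * (v - w) < J - ε := by
      rw [div_mul_eq_mul_div, div_lt_iff₀ hΔξ]
      nlinarith [mul_le_mul_of_nonneg_left hm1 hΔξ.le]
    have hAb2 : Δτ / Δξ * (v - w) < J * (1 - φ) := by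
      rw [div_mul_eq_mul_div, div_lt_iff₀ hΔξ]
      nlinarith [mul_le_mul_of_nonneg_left hm2 hΔξ.le]
    have hεD : ε < J + Δτ / Δξ * (w - v) := by
      have he : Δτ / Δξ * (w - v) = -(Δτ / Δξ * (v - w)) := by ring
      rw [he]; linarith
    have hDgtJφ : J * φ < J + Δτ / Δξ * (w - v) := by
      have he : Δτ / Δξ * (w - v) = -(Δτ / Δξ * (v - w)) := by ring
      rw [he]; linarith
    have hDpos : 0 < J + Δτ / Δξ * (w - v) := by linarith
    have hφ'pos : 0 < J * φ / (J + Δτ / Δξ * (w - v)) :=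
      div_pos (mul_pos (by linarith) hφ0) hDpos
    have hφ'lt1 : J * φ / (J + Δτ / Δξ * (w - v)) < 1 := by
      rw [div_lt_one hDpos]; exact hDgtJφ
    have hφltφ' : φ < J * φ / (J + Δτ / Δξ * (w - v)) := by
      rw [lt_div_iff₀ hDpos]
      have hneg : Δτ / Δξ * (v - w) > 0 := mul_pos hΔ (by linarith)
      have := mul_pos hφ0 hneg
      linarith [this]
    have hφ'γ : φ ^ γ < (J * φ / (J + Δτ / Δξ * (w - v))) ^ γ :=
      Real.rpow_lt_rpow (le_of_lt hφ0) hφltφ' hγ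
    refine ⟨hεD, hφ'pos, hφ'lt1, hk1, hk2, ?_, ?_⟩
    · have hQ : 0 < γ / vref * (k - vmin) := by
        have hkv' : 0 < k - v := by rw [hkv]; positivity
        exact mul_pos (div_pos hγ hvref) (by linarith)
      set Q := (γ / vref * (k - vmin)) ^ (1/γ) with hQdef
      have hQpos : 0 < Q := Real.rpow_pos_of_pos hQ (1/γ)
      have hQγ : Q ^ γ = γ / vref * (k - vmin) := key _ hQ
      have h1 := hstar2 hgt
      have hden : 0 < Q * (v - w) := mul_pos hQpos (by linarith)
      rw [lt_div_iff₀ hden] at h1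
      have hφ'ltQ : J * φ / (J + Δτ / Δξ * (w - v)) < Q := by
        rw [div_lt_iff₀ hDpos]
        have h2 : Δτ / Δξ * (Q * (v - w)) < J * (Q - φ) := by
          rw [div_mul_eq_mul_div, div_lt_iff₀ hΔξ]
          linarith
        linarith [h2]
      have h3 := Real.rpow_lt_rpow (le_of_lt hφ'pos) hφ'ltQ hγ
      rw [hQγ] at h3
      have h4 : vref / γ * (J * φ / (J + Δτ / Δξ * (w - v))) ^ γ <
          vref / γ * (γ / vref * (k - vmin)) := mul_lt_mul_of_pos_left h3 hcγ
      have h5 : vref / γ * (γ / vref * (k - vmin)) = k - vmin := by field_simp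
      linarith
    · linarith [mul_lt_mul_of_pos_left hφ'γ hcγ]
end

section
/- Let ε > 0, Δξ > 0, 0 < k_min ≤ k_max, and 0 ≤ v_min ≤ v_max be real numbers. Suppose the cell values satisfy J > ε, φ ∈ (0, 1), k ∈ [k_min, k_max], and v := k·(1 − φ)² ∈ [v_min, v_max]; let w ∈ ℝ be the right-neighbor velocity v_{j+1}^n. Define the first-order moving-mesh update J' := J + (Δτ/Δξ)·(w − v), φ' := J·φ / J', k' := k, and v' := k·(1 − φ')². Define Δτ* := Δξ·min{J − ε, J·(1−φ)}/(v − w) if v > w, and Δτ* := +∞ otherwise. Define φ̌ := 1 − √(v_max/k) and φ̂ := 1 − √(v_min/k), and set Δτ** := Δξ·J·(φ − φ̌)/(φ̌·(w − v)) if v < w and k > v_max; Δτ** := Δξ·J·(φ̂ − φ)/(φ̂·(v − w)) if v > w; and Δτ** := +∞ otherwise. Then for every Δτ with 0 < Δτ < min{Δτ*, Δτ**}, the updated values satisfy J' > ε, φ' ∈ (0, 1), k' ∈ [k_min, k_max], and v' ∈ [v_min, v_max]. -/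
/-!
The update keeps `Jφ` and `k` fixed and only moves `J' = J + (Δτ/Δξ)(w − v)`, so
`φ' = Jφ/J'` is a monotone function of `J'`. The time-step bounds are exactly what keeps
`J'` above both `ε` and `Jφ`, which gives `J' > ε` and `φ' ∈ (0, 1)`. Since `k` is unchanged,
`v' = k(1 − φ')² ∈ [v_min, v_max]` is equivalent to `φ' ∈ [φ̌, φ̂]` with
`φ̌ = 1 − √(v_max/k)` and `φ̂ = 1 − √(v_min/k)`; moving `J'` in one direction can only violate
one of these two bounds, and `Δτ**` is the time step at which it would be reached.
-/

open Real

/-- Here `r = Δτ/Δξ`, `v = v_j^n` and `w = v_{j+1}^n`. -/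
def jacobianUpdate (J r v w : ℝ) : ℝ := J + r * (w - v)

/-- The scheme leaves `Jφ` unchanged, so `φ' = (Jφ)/J'`. -/
noncomputable def fractionUpdate (J φ r v w : ℝ) : ℝ := J * φ / jacobianUpdate J r v w

theorem div_mul_lt_of_lt_mul_div {Δτ Δξ A B : ℝ} (hΔξ : 0 < Δξ) (hB : 0 < B)
    (h : Δτ < Δξ * A / B) : Δτ / Δξ * B < A := by
  rw [lt_div_iff₀ hB] at h
  rw [div_mul_eq_mul_div, div_lt_iff₀ hΔξ]
  linarith

theorem le_mul_one_sub_sq_iff {k φ c : ℝ} (hk : 0 < k) (hφ : φ ≤ 1) :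
    c ≤ k * (1 - φ) ^ 2 ↔ φ ≤ 1 - √(c / k) := by
  rw [le_sub_comm, sqrt_le_left (sub_nonneg.2 hφ), div_le_iff₀' hk]

theorem mul_one_sub_sq_le_iff {k φ c : ℝ} (hk : 0 < k) (hc : 0 ≤ c) (hφ : φ ≤ 1) :
    k * (1 - φ) ^ 2 ≤ c ↔ 1 - √(c / k) ≤ φ := by
  rw [sub_le_comm, le_sqrt (sub_nonneg.2 hφ) (div_nonneg hc hk.le), le_div_iff₀' hk]

section Update

variable {J φ r v w : ℝ}

theorem lt_jacobianUpdate {L : ℝ} (hr : 0 ≤ r) (hL : L < J)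
    (hstep : w < v → r * (v - w) < J - L) : L < jacobianUpdate J r v w := by
  unfold jacobianUpdate
  rcases le_or_gt v w with h | h
  · nlinarith [mul_nonneg hr (sub_nonneg.2 h)]
  · linarith [hstep h]

theorem fractionUpdate_le {b : ℝ} (hr : 0 ≤ r) (hJ : 0 ≤ J) (hb : 0 ≤ b)
    (hJ' : 0 < jacobianUpdate J r v w) (hφb : φ ≤ b)
    (hstep : w < v → r * (b * (v - w)) < J * (b - φ)) : fractionUpdate J φ r v w ≤ b := by
  rw [fractionUpdate, div_le_iff₀ hJ', jacobianUpdate]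
  rcases le_or_gt v w with h | h
  · nlinarith [mul_nonneg (mul_nonneg hr hb) (sub_nonneg.2 h), mul_le_mul_of_nonneg_left hφb hJ]
  · linarith [hstep h]

theorem le_fractionUpdate {b : ℝ} (hr : 0 ≤ r) (hJ : 0 ≤ J) (hb : 0 ≤ b)
    (hJ' : 0 < jacobianUpdate J r v w) (hbφ : b ≤ φ)
    (hstep : v < w → r * (b * (w - v)) < J * (φ - b)) : b ≤ fractionUpdate J φ r v w := by
  rw [fractionUpdate, le_div_iff₀ hJ', jacobianUpdate]
  rcases le_or_gt w v with h | h
  · nlinarith [mul_nonneg (mul_nonneg hr hb) (sub_nonneg.2 h), mul_le_mul_of_nonneg_left hbφ hJ]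
  · linarith [hstep h]

end Update

theorem stmt_7_general (ε Δξ kmin kmax vmin vmax J φ k v w Δτ : ℝ)
    (hε : 0 < ε) (hΔξ : 0 < Δξ) (hkmin : 0 < kmin)
    (hJ : ε < J) (hφ0 : 0 < φ) (hφ1 : φ < 1)
    (hk1 : kmin ≤ k) (hk2 : k ≤ kmax)
    (hvdef : v = k * (1 - φ) ^ 2)
    (hv1 : vmin ≤ v) (hv2 : v ≤ vmax)
    (hΔτ : 0 < Δτ)
    (hstar : v > w → Δτ < Δξ * min (J - ε) (J * (1 - φ)) / (v - w))
    (hstar1 : v < w ∧ k > vmax →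
      Δτ < Δξ * J * (φ - (1 - Real.sqrt (vmax / k))) /
        ((1 - Real.sqrt (vmax / k)) * (w - v)))
    (hstar2 : v > w →
      Δτ < Δξ * J * ((1 - Real.sqrt (vmin / k)) - φ) /
        ((1 - Real.sqrt (vmin / k)) * (v - w))) :
    ε < J + Δτ / Δξ * (w - v) ∧
    0 < J * φ / (J + Δτ / Δξ * (w - v)) ∧
    J * φ / (J + Δτ / Δξ * (w - v)) < 1 ∧
    kmin ≤ k ∧ k ≤ kmax ∧
    vmin ≤ k * (1 - J * φ / (J + Δτ / Δξ * (w - v))) ^ 2 ∧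
    k * (1 - J * φ / (J + Δτ / Δξ * (w - v))) ^ 2 ≤ vmax := by
  have hk : 0 < k := hkmin.trans_le hk1
  have hJ0 : 0 < J := hε.trans hJ
  have hr : 0 ≤ Δτ / Δξ := (div_pos hΔτ hΔξ).le
  have hvmax : 0 ≤ vmax := (hvdef ▸ by positivity : 0 ≤ v).trans hv2
  have hJ' : ε < jacobianUpdate J (Δτ / Δξ) v w := lt_jacobianUpdate hr hJ fun h =>
    (div_mul_lt_of_lt_mul_div hΔξ (sub_pos.2 h) (hstar h)).trans_le (min_le_left _ _)
  have hJφ : J * φ < jacobianUpdate J (Δτ / Δξ) v w :=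
    lt_jacobianUpdate hr (mul_lt_of_lt_one_right hJ0 hφ1) fun h =>
      ((div_mul_lt_of_lt_mul_div hΔξ (sub_pos.2 h) (hstar h)).trans_le
        (min_le_right _ _)).trans_eq (by ring)
  have hJ'pos := hε.trans hJ'
  have hφ'0 : 0 < fractionUpdate J φ (Δτ / Δξ) v w := div_pos (mul_pos hJ0 hφ0) hJ'pos
  have hφ'1 : fractionUpdate J φ (Δτ / Δξ) v w < 1 := (div_lt_one hJ'pos).2 hJφ
  have hφ'le : fractionUpdate J φ (Δτ / Δξ) v w ≤ 1 - √(vmin / k) := by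
    have hφb : φ ≤ 1 - √(vmin / k) := (le_mul_one_sub_sq_iff hk hφ1.le).1 (hvdef ▸ hv1)
    exact fractionUpdate_le hr hJ0.le (hφ0.le.trans hφb) hJ'pos hφb fun h =>
      div_mul_lt_of_lt_mul_div hΔξ (mul_pos (hφ0.trans_le hφb) (sub_pos.2 h))
        (by rw [← mul_assoc]; exact hstar2 h)
  have hφ'ge : 1 - √(vmax / k) ≤ fractionUpdate J φ (Δτ / Δξ) v w := by
    rcases le_or_gt k vmax with hkv | hkv
    · have : 1 ≤ √(vmax / k) := one_le_sqrt.2 ((one_le_div hk).2 hkv)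
      linarith
    · have hb : 0 < 1 - √(vmax / k) :=
        sub_pos.2 ((sqrt_lt' one_pos).2 (by rwa [one_pow, div_lt_one hk]))
      exact le_fractionUpdate hr hJ0.le hb.le hJ'pos
        ((mul_one_sub_sq_le_iff hk hvmax hφ1.le).1 (hvdef ▸ hv2)) fun h =>
          div_mul_lt_of_lt_mul_div hΔξ (mul_pos hb (sub_pos.2 h))
            (by rw [← mul_assoc]; exact hstar1 ⟨h, hkv⟩)
  exact ⟨hJ', hφ'0, hφ'1, hk1, hk2,
    (le_mul_one_sub_sq_iff hk hφ'1.le).2 hφ'le, (mul_one_sub_sq_le_iff hk hvmax hφ'1.le).2 hφ'ge⟩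

/-- Remark after Theorem 3.2: first-order bound preservation for the
sedimentation model, `v = k·(1−φ)²`.  The moving-mesh update preserves
`Ω = {J > ε, φ ∈ (0,1), k ∈ [k_min,k_max], v ∈ [v_min,v_max]}` under
`0 < Δτ < min{Δτ*, Δτ**}` (with the convention that absent cases give `+∞`). -/
theorem stmt_7 (ε Δξ kmin kmax vmin vmax J φ k v w Δτ : ℝ)
    (hε : 0 < ε) (hΔξ : 0 < Δξ) (hkmin : 0 < kmin) (hkle : kmin ≤ kmax)
    (hv0 : 0 ≤ vmin) (hvle : vmin ≤ vmax)
    (hJ : ε < J) (hφ0 : 0 < φ) (hφ1 : φ < 1)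
    (hk1 : kmin ≤ k) (hk2 : k ≤ kmax)
    (hvdef : v = k * (1 - φ) ^ 2)
    (hv1 : vmin ≤ v) (hv2 : v ≤ vmax)
    (hΔτ : 0 < Δτ)
    (hstar : v > w → Δτ < Δξ * min (J - ε) (J * (1 - φ)) / (v - w))
    (hstar1 : v < w ∧ k > vmax →
      Δτ < Δξ * J * (φ - (1 - Real.sqrt (vmax / k))) /
        ((1 - Real.sqrt (vmax / k)) * (w - v)))
    (hstar2 : v > w →
      Δτ < Δξ * J * ((1 - Real.sqrt (vmin / k)) - φ) /
        ((1 - Real.sqrt (vmin / k)) * (v - w))) :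
    ε < J + Δτ / Δξ * (w - v) ∧
    0 < J * φ / (J + Δτ / Δξ * (w - v)) ∧
    J * φ / (J + Δτ / Δξ * (w - v)) < 1 ∧
    kmin ≤ k ∧ k ≤ kmax ∧
    vmin ≤ k * (1 - J * φ / (J + Δτ / Δξ * (w - v))) ^ 2 ∧
    k * (1 - J * φ / (J + Δτ / Δξ * (w - v))) ^ 2 ≤ vmax :=
  stmt_7_general ε Δξ kmin kmax vmin vmax J φ k v w Δτ hε hΔξ hkmin hJ hφ0 hφ1 hk1 hk2 hvdef hv1 hv2
    hΔτ hstar hstar1 hstar2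
end

section
/- Let ε > 0, Δξ > 0, v_ref > 0, k_min ≤ k_max, and 0 ≤ v_min ≤ v_max be real numbers. Suppose the cell values satisfy J > ε, φ ∈ (0, 1), k ∈ [k_min, k_max], and v := k − v_ref·log φ ∈ [v_min, v_max]; let w ∈ ℝ be the right-neighbor velocity v_{j+1}^n. Define the first-order moving-mesh update J' := J + (Δτ/Δξ)·(w − v), φ' := J·φ / J', k' := k, and v' := k − v_ref·log φ'. Define Δτ* := Δξ·min{J − ε, J·(1−φ)}/(v − w) if v > w, and Δτ* := +∞ otherwise. Define φ̌ := exp((k − v_max)/v_ref) and φ̂ := exp((k − v_min)/v_ref), and set Δτ** := Δξ·J·(φ − φ̌)/(φ̌·(w − v)) if v < w; Δτ** := Δξ·J·(φ̂ − φ)/(φ̂·(v − w)) if v > w; and Δτ** := +∞ otherwise. Then for every Δτ with 0 < Δτ < min{Δτ*, Δτ**}, the updated values satisfy J' > ε, φ' ∈ (0, 1), k' ∈ [k_min, k_max], and v' ∈ [v_min, v_max]. -/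
set_option maxHeartbeats 1000000 in
/-- Remark after Theorem 3.2: first-order bound preservation for the ARZ model
with `γ = 0`, pressure `p(φ) = v_ref·log φ`.  The moving-mesh update preserves
`Ω = {J > ε, φ ∈ (0,1), k ∈ [k_min,k_max], v ∈ [v_min,v_max]}` under
`0 < Δτ < min{Δτ*, Δτ**}` (with the convention that absent cases give `+∞`). -/
theorem stmt_8 (ε Δξ vref kmin kmax vmin vmax J φ k v w Δτ : ℝ)
    (hε : 0 < ε) (hΔξ : 0 < Δξ) (hvref : 0 < vref)
    (hkle : kmin ≤ kmax) (hv0 : 0 ≤ vmin) (hvle : vmin ≤ vmax)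
    (hJ : ε < J) (hφ0 : 0 < φ) (hφ1 : φ < 1)
    (hk1 : kmin ≤ k) (hk2 : k ≤ kmax)
    (hvdef : v = k - vref * Real.log φ)
    (hv1 : vmin ≤ v) (hv2 : v ≤ vmax)
    (hΔτ : 0 < Δτ)
    (hstar : v > w → Δτ < Δξ * min (J - ε) (J * (1 - φ)) / (v - w))
    (hstar1 : v < w →
      Δτ < Δξ * J * (φ - Real.exp ((k - vmax) / vref)) /
        (Real.exp ((k - vmax) / vref) * (w - v)))
    (hstar2 : v > w →
      Δτ < Δξ * J * (Real.exp ((k - vmin) / vref) - φ) /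
        (Real.exp ((k - vmin) / vref) * (v - w))) :
    ε < J + Δτ / Δξ * (w - v) ∧
    0 < J * φ / (J + Δτ / Δξ * (w - v)) ∧
    J * φ / (J + Δτ / Δξ * (w - v)) < 1 ∧
    kmin ≤ k ∧ k ≤ kmax ∧
    vmin ≤ k - vref * Real.log (J * φ / (J + Δτ / Δξ * (w - v))) ∧
    k - vref * Real.log (J * φ / (J + Δτ / Δξ * (w - v))) ≤ vmax := by
  have ha0 : 0 < Δτ / Δξ := div_pos hΔτ hΔξ
  set a := Δτ / Δξ with ha
  set J' := J + a * (w - v) with hJ'def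
  set pc := Real.exp ((k - vmax) / vref) with hpc
  set ph := Real.exp ((k - vmin) / vref) with hph
  have hpc0 : 0 < pc := Real.exp_pos _
  have hph0 : 0 < ph := Real.exp_pos _
  have hJ0 : 0 < J := lt_trans hε hJ
  have hJφ : J * φ < J := by nlinarith
  have hJφ0 : 0 < J * φ := mul_pos hJ0 hφ0
  have hlogφ : Real.log φ = (k - v) / vref := by
    field_simp
    linarith [hvdef]
  have hpcφ : pc ≤ φ := by
    rw [hpc, ← Real.exp_log hφ0]
    apply Real.exp_le_exp.mpr
    rw [hlogφ]
    gcongr <;> linarith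
  have hφph : φ ≤ ph := by
    rw [hph, ← Real.exp_log hφ0]
    apply Real.exp_le_exp.mpr
    rw [hlogφ]
    gcongr <;> linarith
  have hpcJ : pc * J ≤ φ * J := mul_le_mul_of_nonneg_right hpcφ hJ0.le
  have hphJ : J * φ ≤ J * ph := mul_le_mul_of_nonneg_left hφph hJ0.le
  -- key facts
  have key : ε < J' ∧ J * φ < J' ∧ pc * J' ≤ J * φ ∧ J * φ ≤ ph * J' := by
    rcases lt_trichotomy v w with h | h | h
    · -- v < w : J' > J
      have hd : 0 < pc * (w - v) := mul_pos hpc0 (by linarith)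
      have h1 := (lt_div_iff₀ hd).mp (hstar1 h)
      have h2 : a * (pc * (w - v)) < J * (φ - pc) := by
        rw [ha, div_mul_eq_mul_div, div_lt_iff₀ hΔξ]
        linarith [h1]
      have hgrow : 0 < a * (w - v) := mul_pos ha0 (by linarith)
      have hphg : 0 < ph * (a * (w - v)) := mul_pos hph0 hgrow
      refine ⟨?_, ?_, ?_, ?_⟩ <;> rw [hJ'def] <;> ring_nf <;> ring_nf at h2 hphg hgrow ⊢ <;>
        linarith
    · -- v = w
      have hz : J' = J := by simp [hJ'def, h]
      rw [hz]
      exact ⟨hJ, hJφ, by linarith, by linarith⟩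
    · -- v > w : J' < J
      have hvw : 0 < v - w := by linarith
      have h1 := (lt_div_iff₀ hvw).mp (hstar h)
      have h1' : a * (v - w) < min (J - ε) (J * (1 - φ)) := by
        rw [ha, div_mul_eq_mul_div, div_lt_iff₀ hΔξ]
        linarith [h1]
      have hm1 : a * (v - w) < J - ε := lt_of_lt_of_le h1' (min_le_left _ _)
      have hm2 : a * (v - w) < J * (1 - φ) := lt_of_lt_of_le h1' (min_le_right _ _)
      have hd : 0 < ph * (v - w) := mul_pos hph0 hvw
      have h2 := (lt_div_iff₀ hd).mp (hstar2 h)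
      have h3 : a * (ph * (v - w)) < J * (ph - φ) := by
        rw [ha, div_mul_eq_mul_div, div_lt_iff₀ hΔξ]
        linarith [h2]
      have hpcs : 0 < pc * (a * (v - w)) := mul_pos hpc0 (mul_pos ha0 hvw)
      refine ⟨?_, ?_, ?_, ?_⟩ <;> rw [hJ'def] <;> ring_nf <;>
        ring_nf at hm1 hm2 h3 hpcs hpcJ ⊢ <;> linarith
  obtain ⟨k1, k2, k3, k4⟩ := key
  have hJ'0 : 0 < J' := lt_trans hε k1
  have hφ'0 : 0 < J * φ / J' := div_pos hJφ0 hJ'0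
  have hφ'1 : J * φ / J' < 1 := (div_lt_one hJ'0).mpr k2
  have hφ'ph : J * φ / J' ≤ ph := (div_le_iff₀ hJ'0).mpr (by linarith)
  have hpcφ' : pc ≤ J * φ / J' := (le_div_iff₀ hJ'0).mpr (by linarith)
  refine ⟨k1, hφ'0, hφ'1, hk1, hk2, ?_, ?_⟩
  · have hlb : Real.log (J * φ / J') ≤ (k - vmin) / vref := by
      rw [hph] at hφ'ph
      exact (Real.log_le_iff_le_exp hφ'0).mpr hφ'ph
    have := (le_div_iff₀ hvref).mp hlb
    linarith
  · have hub : (k - vmax) / vref ≤ Real.log (J * φ / J') := by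
      rw [hpc] at hpcφ'
      exact (Real.le_log_iff_exp_le hφ'0).mpr hpcφ'
    have := (div_le_iff₀ hvref).mp hub
    linarith
end

section
/- Let v_ref > 0, γ > 0, and s ∈ ℝ. Then the function h(a, b, c) := b − a·s − (v_ref/γ)·a^{γ+1}·c^{−γ} is concave on the convex set {(a, b, c) ∈ ℝ³ : a > 0, c > 0}. -/
open Real Finset

/-- Key convexity inequality for `(a,c) ↦ a^(γ+1) * c^(-γ)` on the positive quadrant,
proved via the weighted Hölder inequality. -/
lemma key_ineq (γ : ℝ) (hγ : 0 < γ) {a c x z u v : ℝ}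
    (ha : 0 < a) (hc : 0 < c) (hx : 0 < x) (hz : 0 < z)
    (hu : 0 ≤ u) (hv : 0 ≤ v) (huv : u + v = 1) :
    (u * a + v * x) ^ (γ + 1) * (u * c + v * z) ^ (-γ) ≤
      u * (a ^ (γ + 1) * c ^ (-γ)) + v * (x ^ (γ + 1) * z ^ (-γ)) := by
  set p : ℝ := γ + 1 with hp
  have hp1 : (1:ℝ) ≤ p := by simp [hp]; linarith
  have hp0 : (0:ℝ) < p := by linarith
  have hT : 0 < u * c + v * z := by
    rcases eq_or_lt_of_le hu with h | h
    · have hv1 : v = 1 := by linarith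
      simp [← h, hv1, hz]
    · nlinarith
  have hL : 0 ≤ u * a + v * x := by positivity
  have hS : 0 < u * (a ^ p * c ^ (-γ)) + v * (x ^ p * z ^ (-γ)) := by
    rcases eq_or_lt_of_le hu with h | h
    · have hv1 : v = 1 := by linarith
      have : 0 < x ^ p * z ^ (-γ) := by positivity
      simp [← h, hv1]; positivity
    · have h1 : 0 < a ^ p * c ^ (-γ) := by positivity
      have h2 : 0 ≤ x ^ p * z ^ (-γ) := by positivity
      nlinarith
  -- weighted Hölder
  have holder := inner_le_weight_mul_Lp_of_nonneg (Finset.univ : Finset (Fin 2)) hp1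
    ![u * c, v * z] ![a / c, x / z]
    (by intro i; fin_cases i <;> simp <;> positivity)
    (by intro i; fin_cases i <;> simp <;> positivity)
  simp only [Fin.sum_univ_two, Matrix.cons_val_zero, Matrix.cons_val_one, Matrix.head_cons] at holder
  have e1 : u * c * (a / c) = u * a := by field_simp
  have e2 : v * z * (x / z) = v * x := by field_simp
  have e3 : u * c * (a / c) ^ p = u * (a ^ p * c ^ (-γ)) := by
    rw [div_rpow ha.le hc.le, show (-γ) = 1 - p by rw [hp]; ring,
      Real.rpow_sub hc, Real.rpow_one]
    field_simp
  have e4 : v * z * (x / z) ^ p = v * (x ^ p * z ^ (-γ)) := by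
    rw [div_rpow hx.le hz.le, show (-γ) = 1 - p by rw [hp]; ring,
      Real.rpow_sub hz, Real.rpow_one]
    field_simp
  rw [e1, e2, e3, e4] at holder
  set S : ℝ := u * (a ^ p * c ^ (-γ)) + v * (x ^ p * z ^ (-γ))
  set T : ℝ := u * c + v * z
  -- raise to power p
  have hpow : (u * a + v * x) ^ p ≤ T ^ γ * S := by
    calc (u * a + v * x) ^ p ≤ (T ^ (1 - p⁻¹) * S ^ p⁻¹) ^ p :=
          Real.rpow_le_rpow hL holder hp0.le
      _ = T ^ γ * S := by
          rw [Real.mul_rpow (by positivity) (by positivity),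
            ← Real.rpow_mul hT.le, ← Real.rpow_mul hS.le]
          rw [show (1 - p⁻¹) * p = γ by field_simp; rw [hp]; ring,
            show p⁻¹ * p = 1 by field_simp, Real.rpow_one]
  have hTneg : (0:ℝ) < T ^ (-γ) := by positivity
  have : (u * a + v * x) ^ p * T ^ (-γ) ≤ T ^ γ * S * T ^ (-γ) := by
    exact mul_le_mul_of_nonneg_right hpow hTneg.le
  calc (u * a + v * x) ^ p * T ^ (-γ) ≤ T ^ γ * S * T ^ (-γ) := this
    _ = (T ^ γ * T ^ (-γ)) * S := by ring
    _ = S := by rw [← Real.rpow_add hT]; simp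

/-- Section 4.2 concavity claim (ARZ, γ > 0): the function
`h(a,b,c) = b − a·s − (v_ref/γ)·a^{γ+1}·c^{−γ}` is concave on
`{(a,b,c) : a > 0, c > 0}`. -/
theorem stmt_9 (vref γ s : ℝ) (hvref : 0 < vref) (hγ : 0 < γ) :
    ConcaveOn ℝ {p : ℝ × ℝ × ℝ | 0 < p.1 ∧ 0 < p.2.2}
      (fun p => p.2.1 - p.1 * s - vref / γ * p.1 ^ (γ + 1) * p.2.2 ^ (-γ)) := by
  have hC : 0 < vref / γ := by positivity
  constructor
  · intro P hP Q hQ u v hu hv huv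
    constructor
    · simp only [Prod.fst_add, Prod.smul_fst, smul_eq_mul]
      rcases eq_or_lt_of_le hu with h | h
      · have hv1 : v = 1 := by linarith
        simpa [← h, hv1] using hQ.1
      · nlinarith [hP.1, hQ.1]
    · simp only [Prod.snd_add, Prod.smul_snd, Prod.fst_add, Prod.smul_fst, smul_eq_mul]
      rcases eq_or_lt_of_le hu with h | h
      · have hv1 : v = 1 := by linarith
        simpa [← h, hv1] using hQ.2
      · nlinarith [hP.2, hQ.2]
  · intro P hP Q hQ u v hu hv huv
    obtain ⟨ha, hc⟩ := hP
    obtain ⟨hx, hz⟩ := hQ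
    simp only [Prod.fst_add, Prod.snd_add, Prod.smul_fst, Prod.smul_snd, smul_eq_mul]
    have key := key_ineq γ hγ ha hc hx hz hu hv huv
    nlinarith [mul_le_mul_of_nonneg_left key hC.le]
end
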